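/- In the rationality graph Γ_{c_I} (vertices ν_0(c_I) = A_I ⊔ B_I, arrow α → β iff c_I^{-1}(α) ≤ β in the root-poset order), no arrow starts at a vertex of B_I, and no arrow goes from a vertex of A_I to a vertex of A_I. Consequently Γ_{c_I} contains no directed cycle. -/

import Mathlib

noncomputable section

open Finset

/-- `ee r i` is the standard basis vector `e_i` (1-based index) of `ℝ^r`. -/
def ee (r i : ℕ) : Fin r → ℝ := fun j => if (j : ℕ) + 1 = i then 1 else 0

/-- The type-`D_r` simple roots, 1-based: `α_i = e_i - e_{i+1}` for `i ≤ r-1`,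
`α_r = e_{r-1} + e_r`. -/
def sroot (r i : ℕ) : Fin r → ℝ :=
  if i = r then ee r (r - 1) + ee r r else ee r i - ee r (i + 1)

/-- Root-poset order: `ρ ≤ η` iff `η - ρ` is a non-negative integer combination
of the simple roots. -/
def rootLE (r : ℕ) (ρ η : Fin r → ℝ) : Prop :=
  ∃ m : ℕ → ℕ, η - ρ = ∑ i ∈ Finset.Icc 1 r, (m i : ℝ) • sroot r i

/-- The positive roots of type `D_r`: `e_i ± e_j` for `1 ≤ i < j ≤ r`. -/
def Pos (r : ℕ) : Set (Fin r → ℝ) :=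
  {v | ∃ i j, 1 ≤ i ∧ i < j ∧ j ≤ r ∧ (v = ee r i - ee r j ∨ v = ee r i + ee r j)}

/-- The `i`-th (1-based) coordinate of a vector. -/
def coordN (r : ℕ) (x : Fin r → ℝ) (i : ℕ) : ℝ :=
  ∑ j : Fin r, if (j : ℕ) + 1 = i then x j else 0

/-- The successor map on `I ∪ {r}`: least element of `I ∪ {r}` larger than `a`. -/
def nextI (r : ℕ) (I : Finset ℕ) (a : ℕ) : ℕ :=
  (((insert r I).filter (fun x => a < x)).min).untopD r

/-- `min (I ∪ {r})`; equals `min I` for nonempty `I ⊆ {1,…,r-1}` and `r` for `I = ∅`. -/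
def minI (r : ℕ) (I : Finset ℕ) : ℕ := ((insert r I).min).untopD r

/-- `max I` (0 if empty). -/
def maxI (I : Finset ℕ) : ℕ := (I.max).unbotD 0

/-- The increasing cycle `p_I` on `I ∪ {r}`, fixing all other points. -/
def pI (r : ℕ) (I : Finset ℕ) (a : ℕ) : ℕ :=
  if a ∈ I then nextI r I a else if a = r then minI r I else a

/-- Images of the basis vectors under `c_I`. -/
def cIb (r : ℕ) (I : Finset ℕ) (j : ℕ) : Fin r → ℝ :=
  if j = r then ee r (minI r I) else -(ee r (pI r I j))

/-- The signed permutation `c_I`, extended linearly; for `I = ∅` it is `w_0`. -/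
def cI (r : ℕ) (I : Finset ℕ) (x : Fin r → ℝ) : Fin r → ℝ :=
  ∑ j ∈ Finset.Icc 1 r, coordN r x j • cIb r I j

/-- Images of the basis vectors under `d_I`. -/
def dIb (r : ℕ) (I : Finset ℕ) (j : ℕ) : Fin r → ℝ :=
  if j = maxI I then ee r r
  else if j = r then -(ee r (minI r I))
  else -(ee r (pI r I j))

/-- The signed permutation `d_I`, extended linearly. -/
def dI (r : ℕ) (I : Finset ℕ) (x : Fin r → ℝ) : Fin r → ℝ :=
  ∑ j ∈ Finset.Icc 1 r, coordN r x j • dIb r I j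

/-- The longest element `w_0` for `r` odd: `e_i ↦ -e_i` for `i < r`, `e_r ↦ e_r`. -/
def w0 (r : ℕ) (x : Fin r → ℝ) : Fin r → ℝ :=
  fun j => if (j : ℕ) + 1 = r then x j else -(x j)

/-- The set `A_I`. -/
def AI (r : ℕ) (I : Finset ℕ) : Set (Fin r → ℝ) :=
  {v | ∃ a b, a ∈ I ∧ a < b ∧ b < nextI r I a ∧ v = ee r b - ee r (nextI r I a)}

/-- The set `B_I`. -/
def BI (r : ℕ) (I : Finset ℕ) : Set (Fin r → ℝ) :=
  {v | ∃ q, minI r I < q ∧ q ≤ r ∧ v = ee r (minI r I) - ee r q}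

/-- `ν₀(u) = u(Π₊) ∩ Π₊`. -/
def nu0 (r : ℕ) (u : (Fin r → ℝ) → (Fin r → ℝ)) : Set (Fin r → ℝ) :=
  {β | β ∈ Pos r ∧ ∃ γ ∈ Pos r, u γ = β}

/-- Arrow `α → β` in the rationality graph of `u`: `u⁻¹(α) ≤ β`,
expressed via a positive preimage `γ` of `α`. -/
def Arrow (r : ℕ) (u : (Fin r → ℝ) → (Fin r → ℝ)) (α β : Fin r → ℝ) : Prop :=
  ∃ γ ∈ Pos r, u γ = α ∧ rootLE r γ β

/-- The rationality graph of `u` has a directed cycle. -/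
def HasCycle (r : ℕ) (u : (Fin r → ℝ) → (Fin r → ℝ)) : Prop :=
  ∃ (n : ℕ) (f : ℕ → (Fin r → ℝ)), 0 < n ∧ (∀ i ≤ n, f i ∈ nu0 r u) ∧
    f 0 = f n ∧ ∀ i < n, Arrow r u (f i) (f (i + 1))

/-- The simple reflection `s_a` for `1 ≤ a ≤ r-1`: swaps coordinates `a` and `a+1`. -/
def sw (r a : ℕ) (x : Fin r → ℝ) : Fin r → ℝ := fun j =>
  if (j : ℕ) + 1 = a then coordN r x (a + 1)
  else if (j : ℕ) + 1 = a + 1 then coordN r x a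
  else x j

/-- The spin reflection `s_r`: `e_{r-1} ↦ -e_r`, `e_r ↦ -e_{r-1}`. -/
def sSpin (r : ℕ) (x : Fin r → ℝ) : Fin r → ℝ := fun j =>
  if (j : ℕ) + 1 = r - 1 then -(coordN r x r)
  else if (j : ℕ) + 1 = r then -(coordN r x (r - 1))
  else x j



-- ==== auxiliary lemmas ====


lemma fin_sum_ite (r k : ℕ) (h1 : 1 ≤ k) (h2 : k ≤ r) (f : Fin r → ℝ) :
    ∑ j : Fin r, (if (j:ℕ)+1 = k then f j else 0) = f ⟨k-1, by omega⟩ := by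
  rw [Finset.sum_eq_single (⟨k-1, by omega⟩ : Fin r)]
  · rw [if_pos (by simp; omega)]
  · intro b _ hb
    rw [if_neg]
    intro h
    exact hb (Fin.ext (by simp; omega))
  · simp

lemma ee_apply' (r s : ℕ) (j : Fin r) : ee r s j = if s = (j:ℕ)+1 then 1 else 0 := by
  unfold ee
  by_cases h : (j:ℕ)+1 = s
  · rw [if_pos h, if_pos h.symm]
  · rw [if_neg h, if_neg (fun hh => h hh.symm)]

lemma coordN_eq (r k : ℕ) (x : Fin r → ℝ) (h1 : 1 ≤ k) (h2 : k ≤ r) :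
    coordN r x k = x ⟨k-1, by omega⟩ := fin_sum_ite r k h1 h2 x

lemma coordN_ee (r t k : ℕ) (h1 : 1 ≤ k) (h2 : k ≤ r) :
    coordN r (ee r t) k = if t = k then 1 else 0 := by
  rw [coordN_eq r k _ h1 h2, ee_apply']
  congr 1
  simp only [eq_iff_iff]
  omega

lemma coordN_add (r : ℕ) (x y : Fin r → ℝ) (k : ℕ) :
    coordN r (x + y) k = coordN r x k + coordN r y k := by
  unfold coordN
  rw [← Finset.sum_add_distrib]
  exact Finset.sum_congr rfl fun j _ => by split_ifs <;> simp

lemma coordN_neg (r : ℕ) (x : Fin r → ℝ) (k : ℕ) :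
    coordN r (-x) k = -(coordN r x k) := by
  unfold coordN
  rw [← Finset.sum_neg_distrib]
  exact Finset.sum_congr rfl fun j _ => by split_ifs <;> simp

lemma cI_add (r : ℕ) (I : Finset ℕ) (x y : Fin r → ℝ) :
    cI r I (x + y) = cI r I x + cI r I y := by
  unfold cI
  rw [← Finset.sum_add_distrib]
  exact Finset.sum_congr rfl fun k _ => by rw [coordN_add, add_smul]

lemma cI_neg (r : ℕ) (I : Finset ℕ) (x : Fin r → ℝ) :
    cI r I (-x) = -(cI r I x) := by
  unfold cI
  rw [← Finset.sum_neg_distrib]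
  exact Finset.sum_congr rfl fun k _ => by rw [coordN_neg, neg_smul]

lemma cI_sub (r : ℕ) (I : Finset ℕ) (x y : Fin r → ℝ) :
    cI r I (x - y) = cI r I x - cI r I y := by
  rw [sub_eq_add_neg, cI_add, cI_neg, sub_eq_add_neg]

lemma cI_ee (r : ℕ) (I : Finset ℕ) (t : ℕ) (h1 : 1 ≤ t) (h2 : t ≤ r) :
    cI r I (ee r t) = cIb r I t := by
  unfold cI
  have h : ∀ k ∈ Finset.Icc 1 r, coordN r (ee r t) k • cIb r I k
      = if t = k then cIb r I k else 0 := by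
    intro k hk
    simp only [mem_Icc] at hk
    rw [coordN_ee r t k hk.1 hk.2]
    split_ifs <;> simp
  rw [Finset.sum_congr rfl h, Finset.sum_ite_eq]
  rw [if_pos (by simp [mem_Icc]; omega)]

-- Pf functional
def Pf (r k : ℕ) (x : Fin r → ℝ) : ℝ := ∑ j : Fin r, if (j:ℕ)+1 ≤ k then x j else 0

lemma Pf_sub (r k : ℕ) (x y : Fin r → ℝ) : Pf r k (x - y) = Pf r k x - Pf r k y := by
  unfold Pf
  rw [← Finset.sum_sub_distrib]
  exact Finset.sum_congr rfl fun j _ => by split_ifs <;> simp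

lemma Pf_add (r k : ℕ) (x y : Fin r → ℝ) : Pf r k (x + y) = Pf r k x + Pf r k y := by
  unfold Pf
  rw [← Finset.sum_add_distrib]
  exact Finset.sum_congr rfl fun j _ => by split_ifs <;> simp

lemma Pf_sum (r k : ℕ) (s : Finset ℕ) (c : ℕ → ℝ) (v : ℕ → Fin r → ℝ) :
    Pf r k (∑ i ∈ s, c i • v i) = ∑ i ∈ s, c i * Pf r k (v i) := by
  unfold Pf
  have h : ∀ j : Fin r, (if (j:ℕ)+1 ≤ k then (∑ i ∈ s, c i • v i) j else 0)
      = ∑ i ∈ s, (if (j:ℕ)+1 ≤ k then c i * v i j else 0) := by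
    intro j
    split_ifs with h
    · simp [Finset.sum_apply]
    · simp
  simp only [h]
  rw [Finset.sum_comm]
  refine Finset.sum_congr rfl fun i _ => ?_
  rw [Finset.mul_sum]
  exact Finset.sum_congr rfl fun j _ => by split_ifs <;> simp

lemma Pf_ee (r k t : ℕ) (h1 : 1 ≤ t) (h2 : t ≤ r) :
    Pf r k (ee r t) = if t ≤ k then 1 else 0 := by
  unfold Pf ee
  have h : ∀ j : Fin r, (if (j:ℕ)+1 ≤ k then (if (j:ℕ)+1 = t then (1:ℝ) else 0) else 0)
      = if (j:ℕ)+1 = t then (if t ≤ k then (1:ℝ) else 0) else 0 := by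
    intro j
    split_ifs <;> first | rfl | (exfalso; omega)
  simp only [h]
  exact fin_sum_ite r t h1 h2 _

lemma Pf_sroot_nonneg (r k i : ℕ) (hr : 5 ≤ r) (hi1 : 1 ≤ i) (hi2 : i ≤ r)
    (hk : k + 2 ≤ r ∨ k = r) : 0 ≤ Pf r k (sroot r i) := by
  unfold sroot
  split_ifs with hir
  · rw [Pf_add, Pf_ee r k (r-1) (by omega) (by omega), Pf_ee r k r (by omega) (by omega)]
    split_ifs <;> norm_num
  · rw [Pf_sub, Pf_ee r k i hi1 hi2, Pf_ee r k (i+1) (by omega) (by omega)]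
    split_ifs <;> first | (exfalso; omega) | norm_num

lemma rootLE_Pf (r k : ℕ) (ρ η : Fin r → ℝ) (hr : 5 ≤ r)
    (h : rootLE r ρ η) (hk : k + 2 ≤ r ∨ k = r) :
    0 ≤ Pf r k η - Pf r k ρ := by
  obtain ⟨m, hm⟩ := h
  rw [← Pf_sub, hm, Pf_sum]
  refine Finset.sum_nonneg fun i hi => ?_
  simp only [mem_Icc] at hi
  exact mul_nonneg (Nat.cast_nonneg _) (Pf_sroot_nonneg r k i hr hi.1 hi.2 hk)

-- ==== combinatorial facts ====

lemma untop'_min (s : Finset ℕ) (h : s.Nonempty) (d : ℕ) : (s.min).untopD d = s.min' h := by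
  rw [← Finset.coe_min' h]
  rfl

lemma minI_spec (r : ℕ) (I : Finset ℕ) :
    minI r I ∈ insert r I ∧ ∀ x ∈ insert r I, minI r I ≤ x := by
  classical
  have hne : (insert r I).Nonempty := ⟨r, mem_insert_self _ _⟩
  constructor
  · rw [minI, untop'_min _ hne]
    exact Finset.min'_mem _ hne
  · intro x hx
    rw [minI, untop'_min _ hne]
    exact Finset.min'_le _ x hx

lemma minI_facts (r : ℕ) (I : Finset ℕ) (hr : 5 ≤ r) (hI : I.Nonempty)
    (hIs : I ⊆ Finset.Icc 1 (r-1)) :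
    minI r I ∈ I ∧ 1 ≤ minI r I ∧ minI r I ≤ r - 1 ∧ ∀ x ∈ I, minI r I ≤ x := by
  obtain ⟨hmem, hle⟩ := minI_spec r I
  obtain ⟨y, hy⟩ := hI
  have hyb := hIs hy
  simp only [mem_Icc] at hyb
  have h1 : minI r I ≤ y := hle y (Finset.mem_insert_of_mem hy)
  have hmemI : minI r I ∈ I := by
    rcases Finset.mem_insert.1 hmem with h | h
    · exfalso; omega
    · exact h
  have hb := hIs hmemI
  simp only [mem_Icc] at hb
  exact ⟨hmemI, hb.1, hb.2, fun x hx => hle x (Finset.mem_insert_of_mem hx)⟩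

lemma nextI_facts (r : ℕ) (I : Finset ℕ) (a : ℕ) (hr : 5 ≤ r)
    (hIs : I ⊆ Finset.Icc 1 (r-1)) (har : a < r) :
    nextI r I a ∈ insert r I ∧ a < nextI r I a ∧ nextI r I a ≤ r ∧
      ∀ x ∈ insert r I, a < x → nextI r I a ≤ x := by
  classical
  set s := (insert r I).filter (fun x => a < x) with hs
  have hne : s.Nonempty := ⟨r, by simp [hs, har]⟩
  have hval : nextI r I a = s.min' hne := by
    rw [nextI, ← hs, untop'_min _ hne]
  have hmem := Finset.min'_mem s hne
  rw [← hval] at hmem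
  rw [hs, Finset.mem_filter] at hmem
  have hler : nextI r I a ≤ r := by
    rcases Finset.mem_insert.1 hmem.1 with h | h
    · omega
    · have := hIs h; simp only [mem_Icc] at this; omega
  refine ⟨hmem.1, hmem.2, hler, fun x hx hax => ?_⟩
  rw [hval]
  exact Finset.min'_le s x (by rw [hs, Finset.mem_filter]; exact ⟨hx, hax⟩)

lemma nextI_inj (r : ℕ) (I : Finset ℕ) (i a : ℕ) (hr : 5 ≤ r)
    (hIs : I ⊆ Finset.Icc 1 (r-1)) (hi : i ∈ I) (ha : a ∈ I)
    (h : nextI r I i = nextI r I a) : i = a := by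
  have hib := hIs hi; have hab := hIs ha
  simp only [mem_Icc] at hib hab
  have hir : i < r := by omega
  have har : a < r := by omega
  obtain ⟨_, hi2, _, hi4⟩ := nextI_facts r I i hr hIs hir
  obtain ⟨_, ha2, _, ha4⟩ := nextI_facts r I a hr hIs har
  rcases lt_trichotomy i a with hlt | heq | hgt
  · have := hi4 a (Finset.mem_insert_of_mem ha) hlt; omega
  · exact heq
  · have := ha4 i (Finset.mem_insert_of_mem hi) hgt; omega

lemma pI_mem (r : ℕ) (I : Finset ℕ) (j : ℕ) (hj : j ∈ I) : pI r I j = nextI r I j := by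
  rw [pI, if_pos hj]

lemma pI_not_mem (r : ℕ) (I : Finset ℕ) (j : ℕ) (hj : j ∉ I) (hjr : j ≠ r) :
    pI r I j = j := by
  rw [pI, if_neg hj, if_neg hjr]

lemma pI_range (r : ℕ) (I : Finset ℕ) (j : ℕ) (hr : 5 ≤ r)
    (hIs : I ⊆ Finset.Icc 1 (r-1)) (hj1 : 1 ≤ j) (hjr : j < r) :
    1 ≤ pI r I j ∧ pI r I j ≤ r := by
  by_cases h : j ∈ I
  · rw [pI_mem r I j h]
    obtain ⟨_, h2, h3, _⟩ := nextI_facts r I j hr hIs hjr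
    omega
  · rw [pI_not_mem r I j h (by omega)]; omega

lemma pI_ne_minI (r : ℕ) (I : Finset ℕ) (j : ℕ) (hr : 5 ≤ r) (hI : I.Nonempty)
    (hIs : I ⊆ Finset.Icc 1 (r-1)) (hj1 : 1 ≤ j) (hjr : j < r) :
    pI r I j ≠ minI r I := by
  obtain ⟨hm1, hm2, hm3, hm4⟩ := minI_facts r I hr hI hIs
  by_cases h : j ∈ I
  · rw [pI_mem r I j h]
    have hj := hm4 j h
    obtain ⟨_, h2, _, _⟩ := nextI_facts r I j hr hIs hjr
    omega
  · rw [pI_not_mem r I j h (by omega)]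
    intro he
    rw [he] at h
    exact h hm1

-- ==== cI on positive roots ====

lemma cI_pos_cases (r : ℕ) (I : Finset ℕ) (γ : Fin r → ℝ) (hγ : γ ∈ Pos r) :
    (∃ i j, 1 ≤ i ∧ i < j ∧ j < r ∧ γ = ee r i - ee r j ∧
        cI r I γ = ee r (pI r I j) - ee r (pI r I i)) ∨
    (∃ i, 1 ≤ i ∧ i < r ∧ γ = ee r i - ee r r ∧
        cI r I γ = -(ee r (pI r I i)) - ee r (minI r I)) ∨
    (∃ i, 1 ≤ i ∧ i < r ∧ γ = ee r i + ee r r ∧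
        cI r I γ = ee r (minI r I) - ee r (pI r I i)) ∨
    (∃ i j, 1 ≤ i ∧ i < j ∧ j < r ∧ γ = ee r i + ee r j ∧
        cI r I γ = -(ee r (pI r I i)) - ee r (pI r I j)) := by
  obtain ⟨i, j, hi1, hij, hjr, hd⟩ := hγ
  have hir : i < r := by omega
  have hcibi : cIb r I i = -(ee r (pI r I i)) := by rw [cIb, if_neg (by omega)]
  rcases hd with hd | hd
  · by_cases hj : j = r
    · rw [hj] at hd
      refine Or.inr (Or.inl ⟨i, hi1, hir, hd, ?_⟩)
      rw [hd, cI_sub, cI_ee r I i hi1 (by omega), cI_ee r I r (by omega) le_rfl,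
          hcibi, cIb, if_pos rfl]
    · refine Or.inl ⟨i, j, hi1, hij, by omega, hd, ?_⟩
      rw [hd, cI_sub, cI_ee r I i hi1 (by omega), cI_ee r I j (by omega) hjr,
          hcibi, cIb, if_neg hj]
      abel
  · by_cases hj : j = r
    · rw [hj] at hd
      refine Or.inr (Or.inr (Or.inl ⟨i, hi1, hir, hd, ?_⟩))
      rw [hd, cI_add, cI_ee r I i hi1 (by omega), cI_ee r I r (by omega) le_rfl,
          hcibi, cIb, if_pos rfl]
      abel
    · refine Or.inr (Or.inr (Or.inr ⟨i, j, hi1, hij, by omega, hd, ?_⟩))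
      rw [hd, cI_add, cI_ee r I i hi1 (by omega), cI_ee r I j (by omega) hjr,
          hcibi, cIb, if_neg hj]
      abel

-- ==== small arithmetic helpers ====

lemma coordN_sub (r : ℕ) (x y : Fin r → ℝ) (k : ℕ) :
    coordN r (x - y) k = coordN r x k - coordN r y k := by
  rw [sub_eq_add_neg, coordN_add, coordN_neg, sub_eq_add_neg]

lemma ind_one {p q : Prop} [Decidable p] [Decidable q]
    (h : (if p then (1:ℝ) else 0) - (if q then 1 else 0) = 1) : p ∧ ¬q := by
  by_cases hp : p <;> by_cases hq : q <;>
    first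
      | (exfalso; norm_num [hp, hq] at h; done)
      | exact ⟨hp, hq⟩

lemma ind_neg_one {p q : Prop} [Decidable p] [Decidable q]
    (h : (if p then (1:ℝ) else 0) - (if q then 1 else 0) = -1) : ¬p ∧ q := by
  by_cases hp : p <;> by_cases hq : q <;>
    first
      | (exfalso; norm_num [hp, hq] at h; done)
      | exact ⟨hp, hq⟩

lemma neg_ind_ne_one {p q : Prop} [Decidable p] [Decidable q]
    (h : -(if p then (1:ℝ) else 0) - (if q then 1 else 0) = 1) : False := by
  by_cases hp : p <;> by_cases hq : q <;> norm_num [hp, hq] at h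

/-- a `+`-type root is never `≤` a `-`-type root. -/
lemma plus_not_le (r : ℕ) (hr : 5 ≤ r) (γ β : Fin r → ℝ) (i j x y : ℕ)
    (hi1 : 1 ≤ i) (hir : i ≤ r) (hj1 : 1 ≤ j) (hjr : j ≤ r)
    (hx1 : 1 ≤ x) (hxr : x ≤ r) (hy1 : 1 ≤ y) (hyr : y ≤ r)
    (hγe : γ = ee r i + ee r j) (hβe : β = ee r x - ee r y)
    (hle : rootLE r γ β) : False := by
  have h0 := rootLE_Pf r r γ β hr hle (Or.inr rfl)
  rw [hγe, hβe, Pf_add, Pf_sub, Pf_ee r r i hi1 hir, Pf_ee r r j hj1 hjr,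
      Pf_ee r r x hx1 hxr, Pf_ee r r y hy1 hyr,
      if_pos hir, if_pos hjr, if_pos hxr, if_pos hyr] at h0
  norm_num at h0

-- ==== no arrow starting at B ====

lemma key_noB (r : ℕ) (hr : 5 ≤ r) (I : Finset ℕ) (hI : I.Nonempty)
    (hIs : I ⊆ Finset.Icc 1 (r-1)) :
    ∀ α ∈ BI r I, ∀ β ∈ AI r I ∪ BI r I, ¬ Arrow r (cI r I) α β := by
  obtain ⟨hm1, hm2, hm3, hm4⟩ := minI_facts r I hr hI hIs
  rintro α ⟨q, hq1, hq2, rfl⟩ β hβ ⟨γ, hγ, hcγ, hle⟩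
  obtain ⟨x, y, hx1, hxy, hyr, hβeq⟩ :
      ∃ x y, 1 ≤ x ∧ x < y ∧ y ≤ r ∧ β = ee r x - ee r y := by
    rcases hβ with ⟨a, b, haI, hab, hbn, hbe⟩ | ⟨q', h1, h2, hbe⟩
    · have hub := hIs haI; simp only [mem_Icc] at hub
      obtain ⟨_, _, hn3, _⟩ := nextI_facts r I a hr hIs (by omega)
      exact ⟨b, nextI r I a, by omega, hbn, hn3, hbe⟩
    · exact ⟨minI r I, q', hm2, h1, h2, hbe⟩
  rcases cI_pos_cases r I γ hγ with ⟨i, j, hi1, hij, hjr, hγe, hce⟩ |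
    ⟨i, hi1, hir, hγe, hce⟩ | ⟨i, hi1, hir, hγe, hce⟩ |
    ⟨i, j, hi1, hij, hjr, hγe, hce⟩
  · -- γ = e_i - e_j, j < r : c γ = e_{p j} - e_{p i}
    have heq := hce.symm.trans hcγ
    have hc : coordN r (ee r (pI r I j) - ee r (pI r I i)) (minI r I)
        = coordN r (ee r (minI r I) - ee r q) (minI r I) := by rw [heq]
    rw [coordN_sub, coordN_sub,
        coordN_ee r (pI r I j) (minI r I) hm2 (by omega),
        coordN_ee r (pI r I i) (minI r I) hm2 (by omega),
        coordN_ee r (minI r I) (minI r I) hm2 (by omega),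
        coordN_ee r q (minI r I) hm2 (by omega)] at hc
    rw [if_neg (pI_ne_minI r I j hr hI hIs (by omega) hjr),
        if_neg (pI_ne_minI r I i hr hI hIs hi1 (by omega)),
        if_pos rfl, if_neg (by omega : ¬ q = minI r I)] at hc
    norm_num at hc
  · -- γ = e_i - e_r : c γ = -e_{p i} - e_{minI}
    have heq := hce.symm.trans hcγ
    have hc : coordN r (-(ee r (pI r I i)) - ee r (minI r I)) (minI r I)
        = coordN r (ee r (minI r I) - ee r q) (minI r I) := by rw [heq]
    rw [coordN_sub, coordN_neg, coordN_sub,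
        coordN_ee r (pI r I i) (minI r I) hm2 (by omega),
        coordN_ee r (minI r I) (minI r I) hm2 (by omega),
        coordN_ee r q (minI r I) hm2 (by omega)] at hc
    rw [if_pos rfl, if_neg (by omega : ¬ q = minI r I)] at hc
    by_cases hp : pI r I i = minI r I <;> norm_num [hp] at hc
  · -- γ = e_i + e_r : plus-type, Sf contradiction
    exact plus_not_le r hr γ β i r x y hi1 (by omega) (by omega) le_rfl
      hx1 (by omega) (by omega) hyr hγe hβeq hle
  · -- γ = e_i + e_j : plus-type
    exact plus_not_le r hr γ β i j x y hi1 (by omega) (by omega) (by omega)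
      hx1 (by omega) (by omega) hyr hγe hβeq hle

-- ==== no arrow A -> A ====

lemma key_noAA (r : ℕ) (hr : 5 ≤ r) (I : Finset ℕ) (hI : I.Nonempty)
    (hIs : I ⊆ Finset.Icc 1 (r-1)) :
    ∀ α ∈ AI r I, ∀ β ∈ AI r I, ¬ Arrow r (cI r I) α β := by
  rintro α ⟨a, b, haI, hab, hbn, rfl⟩ β ⟨a', b', haI', hab', hbn', hβe⟩ ⟨γ, hγ, hcγ, hle⟩
  have hub := hIs haI; simp only [mem_Icc] at hub
  have hub' := hIs haI'; simp only [mem_Icc] at hub'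
  obtain ⟨hn1, hn2, hn3, hn4⟩ := nextI_facts r I a hr hIs (by omega)
  obtain ⟨hn1', hn2', hn3', hn4'⟩ := nextI_facts r I a' hr hIs (by omega)
  have hb1 : 1 ≤ b := by omega
  have hbr : b ≤ r := by omega
  have hnb : ¬ nextI r I a = b := by omega
  rcases cI_pos_cases r I γ hγ with ⟨i, j, hi1, hij, hjr, hγe, hce⟩ |
    ⟨i, hi1, hir, hγe, hce⟩ | ⟨i, hi1, hir, hγe, hce⟩ |
    ⟨i, j, hi1, hij, hjr, hγe, hce⟩
  · -- γ = e_i - e_j, j < r : c γ = e_{p j} - e_{p i}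
    have heq := hce.symm.trans hcγ
    have hcb : coordN r (ee r (pI r I j) - ee r (pI r I i)) b
        = coordN r (ee r b - ee r (nextI r I a)) b := by rw [heq]
    rw [coordN_sub, coordN_sub,
        coordN_ee r (pI r I j) b hb1 hbr, coordN_ee r (pI r I i) b hb1 hbr,
        coordN_ee r b b hb1 hbr, coordN_ee r (nextI r I a) b hb1 hbr,
        if_pos rfl, if_neg hnb, sub_zero] at hcb
    obtain ⟨hpjb, hpib⟩ := ind_one hcb
    have hcn : coordN r (ee r (pI r I j) - ee r (pI r I i)) (nextI r I a)
        = coordN r (ee r b - ee r (nextI r I a)) (nextI r I a) := by rw [heq]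
    rw [coordN_sub, coordN_sub,
        coordN_ee r (pI r I j) (nextI r I a) (by omega) hn3,
        coordN_ee r (pI r I i) (nextI r I a) (by omega) hn3,
        coordN_ee r b (nextI r I a) (by omega) hn3,
        coordN_ee r (nextI r I a) (nextI r I a) (by omega) hn3,
        if_pos rfl, if_neg (by omega : ¬ b = nextI r I a), zero_sub] at hcn
    have hcn' : (if pI r I j = nextI r I a then (1:ℝ) else 0)
        - (if pI r I i = nextI r I a then 1 else 0) = -1 := hcn
    obtain ⟨hpjn, hpin⟩ := ind_neg_one hcn'
    -- b ∉ I, b ≠ r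
    have hbI : b ∉ I := fun hbI =>
      absurd (hn4 b (Finset.mem_insert_of_mem hbI) hab) (by omega)
    -- j ∉ I
    have hjI : j ∉ I := by
      intro hjI
      rw [pI_mem r I j hjI] at hpjb
      obtain ⟨hm1, _, _, _⟩ := nextI_facts r I j hr hIs hjr
      rw [hpjb] at hm1
      rcases Finset.mem_insert.1 hm1 with h | h
      · omega
      · exact hbI h
    have hjb : j = b := by
      rw [pI_not_mem r I j hjI (by omega)] at hpjb; exact hpjb
    -- i ∈ I
    have hiI : i ∈ I := by
      by_contra hiI
      rw [pI_not_mem r I i hiI (by omega)] at hpin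
      rw [hpin] at hiI
      rcases Finset.mem_insert.1 hn1 with h | h
      · omega
      · exact hiI h
    rw [pI_mem r I i hiI] at hpin
    have hia : i = a := nextI_inj r I i a hr hIs hiI haI hpin
    rw [hia, hjb] at hγe
    -- the prefix-sum contradiction at k = a
    have h0 := rootLE_Pf r a γ β hr hle (Or.inl (by omega))
    have hb1' : 1 ≤ b' := by omega
    have hbr' : b' ≤ r := by omega
    rw [hγe, hβe, Pf_sub, Pf_sub, Pf_ee r a b' hb1' hbr', Pf_ee r a (nextI r I a') (by omega) hn3',
        Pf_ee r a a (by omega) (by omega), Pf_ee r a b hb1 hbr,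
        if_pos le_rfl, if_neg (by omega : ¬ b ≤ a), sub_zero] at h0
    by_cases hb'a : b' ≤ a
    · have han' : nextI r I a' ≤ a :=
        hn4' a (Finset.mem_insert_of_mem haI) (by omega)
      rw [if_pos hb'a, if_pos han'] at h0
      norm_num at h0
    · rw [if_neg hb'a] at h0
      by_cases hn'a : nextI r I a' ≤ a <;> norm_num [hn'a] at h0
  · -- γ = e_i - e_r : c γ = -e_{p i} - e_{minI}, all coords ≤ 0
    have heq := hce.symm.trans hcγ
    have hcb : coordN r (-(ee r (pI r I i)) - ee r (minI r I)) b
        = coordN r (ee r b - ee r (nextI r I a)) b := by rw [heq]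
    rw [coordN_sub, coordN_neg,
        coordN_ee r (pI r I i) b hb1 hbr, coordN_ee r (minI r I) b hb1 hbr,
        coordN_sub, coordN_ee r b b hb1 hbr, coordN_ee r (nextI r I a) b hb1 hbr,
        if_pos rfl, if_neg hnb, sub_zero] at hcb
    exact neg_ind_ne_one hcb
  · -- γ = e_i + e_r
    exact plus_not_le r hr γ β i r b' (nextI r I a') hi1 (by omega) (by omega) le_rfl
      (by omega) (by omega) (by omega) hn3' hγe hβe hle
  · -- γ = e_i + e_j
    exact plus_not_le r hr γ β i j b' (nextI r I a') hi1 (by omega) (by omega) (by omega)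
      (by omega) (by omega) (by omega) hn3' hγe hβe hle

-- ==== classification of vertices ====

lemma classify (r : ℕ) (hr : 5 ≤ r) (I : Finset ℕ) (hI : I.Nonempty)
    (hIs : I ⊆ Finset.Icc 1 (r-1)) :
    ∀ β ∈ nu0 r (cI r I), β ∈ AI r I ∪ BI r I := by
  obtain ⟨hm1, hm2, hm3, hm4⟩ := minI_facts r I hr hI hIs
  rintro β ⟨hβPos, γ, hγ, hcγ⟩
  obtain ⟨x, y, hx1, hxy, hyr, hd⟩ := hβPos
  have hxr : x ≤ r := by omega
  have hy1 : 1 ≤ y := by omega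
  have hyx : ¬ y = x := by omega
  -- coordinate of β at x is 1, at y it is ±1
  have hβx : coordN r β x = 1 := by
    rcases hd with hd | hd <;>
      rw [hd] <;>
      [rw [coordN_sub]; rw [coordN_add]] <;>
      rw [coordN_ee r x x hx1 hxr, coordN_ee r y x hx1 hxr, if_pos rfl, if_neg hyx] <;>
      norm_num
  rcases cI_pos_cases r I γ hγ with ⟨i, j, hi1, hij, hjr, hγe, hce⟩ |
    ⟨i, hi1, hir, hγe, hce⟩ | ⟨i, hi1, hir, hγe, hce⟩ |
    ⟨i, j, hi1, hij, hjr, hγe, hce⟩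
  · -- γ = e_i - e_j, j < r : c γ = e_{p j} - e_{p i} = β ; show β ∈ A_I
    have heq := hce.symm.trans hcγ
    have hcx : coordN r (ee r (pI r I j) - ee r (pI r I i)) x = 1 := by rw [heq, hβx]
    rw [coordN_sub, coordN_ee r (pI r I j) x hx1 hxr,
        coordN_ee r (pI r I i) x hx1 hxr] at hcx
    obtain ⟨hpjx, hpix⟩ := ind_one hcx
    rcases hd with hd | hd
    · -- β = e_x - e_y : pi = y, conclude β ∈ A_I
      have hcy : coordN r (ee r (pI r I j) - ee r (pI r I i)) y = -1 := by
        rw [heq, hd, coordN_sub, coordN_ee r x y hy1 hyr, coordN_ee r y y hy1 hyr,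
            if_neg (by omega : ¬ x = y), if_pos rfl]
        norm_num
      rw [coordN_sub, coordN_ee r (pI r I j) y hy1 hyr,
          coordN_ee r (pI r I i) y hy1 hyr] at hcy
      obtain ⟨hpjy, hpiy⟩ := ind_neg_one hcy
      -- i ∈ I
      have hiI : i ∈ I := by
        by_contra hiI
        rw [pI_not_mem r I i hiI (by omega)] at hpiy
        by_cases hjI : j ∈ I
        · rw [pI_mem r I j hjI] at hpjx
          obtain ⟨_, hj2, _, _⟩ := nextI_facts r I j hr hIs hjr
          omega
        · rw [pI_not_mem r I j hjI (by omega)] at hpjx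
          omega
      rw [pI_mem r I i hiI] at hpiy
      obtain ⟨_, _, _, hi4⟩ := nextI_facts r I i hr hIs (by omega)
      -- j ∉ I
      have hjI : j ∉ I := by
        intro hjI
        rw [pI_mem r I j hjI] at hpjx
        obtain ⟨_, hj2, _, _⟩ := nextI_facts r I j hr hIs hjr
        have := hi4 j (Finset.mem_insert_of_mem hjI) hij
        omega
      rw [pI_not_mem r I j hjI (by omega)] at hpjx
      exact Or.inl ⟨i, j, hiI, hij, by omega, by rw [hd, ← hpjx, ← hpiy]⟩
    · -- β = e_x + e_y : impossible
      have hcy : coordN r (ee r (pI r I j) - ee r (pI r I i)) y = 1 := by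
        rw [heq, hd, coordN_add, coordN_ee r x y hy1 hyr, coordN_ee r y y hy1 hyr,
            if_neg (by omega : ¬ x = y), if_pos rfl]
        norm_num
      rw [coordN_sub, coordN_ee r (pI r I j) y hy1 hyr,
          coordN_ee r (pI r I i) y hy1 hyr] at hcy
      obtain ⟨hpjy, _⟩ := ind_one hcy
      omega
  · -- γ = e_i - e_r : c γ = -e_{p i} - e_{minI} = β, impossible
    have heq := hce.symm.trans hcγ
    have hcx : coordN r (-(ee r (pI r I i)) - ee r (minI r I)) x = 1 := by rw [heq, hβx]
    rw [coordN_sub, coordN_neg, coordN_ee r (pI r I i) x hx1 hxr,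
        coordN_ee r (minI r I) x hx1 hxr] at hcx
    exact (neg_ind_ne_one hcx).elim
  · -- γ = e_i + e_r : c γ = e_{minI} - e_{p i} = β ; show β ∈ B_I
    have heq := hce.symm.trans hcγ
    have hcx : coordN r (ee r (minI r I) - ee r (pI r I i)) x = 1 := by rw [heq, hβx]
    rw [coordN_sub, coordN_ee r (minI r I) x hx1 hxr,
        coordN_ee r (pI r I i) x hx1 hxr] at hcx
    obtain ⟨hmx, hpix⟩ := ind_one hcx
    rcases hd with hd | hd
    · -- β = e_x - e_y : β ∈ B_I
      have hcy : coordN r (ee r (minI r I) - ee r (pI r I i)) y = -1 := by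
        rw [heq, hd, coordN_sub, coordN_ee r x y hy1 hyr, coordN_ee r y y hy1 hyr,
            if_neg (by omega : ¬ x = y), if_pos rfl]
        norm_num
      rw [coordN_sub, coordN_ee r (minI r I) y hy1 hyr,
          coordN_ee r (pI r I i) y hy1 hyr] at hcy
      obtain ⟨hmy, hpiy⟩ := ind_neg_one hcy
      exact Or.inr ⟨y, by omega, hyr, by rw [hd, hmx]⟩
    · -- β = e_x + e_y : impossible
      have hcy : coordN r (ee r (minI r I) - ee r (pI r I i)) y = 1 := by
        rw [heq, hd, coordN_add, coordN_ee r x y hy1 hyr, coordN_ee r y y hy1 hyr,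
            if_neg (by omega : ¬ x = y), if_pos rfl]
        norm_num
      rw [coordN_sub, coordN_ee r (minI r I) y hy1 hyr,
          coordN_ee r (pI r I i) y hy1 hyr] at hcy
      obtain ⟨hmy, _⟩ := ind_one hcy
      omega
  · -- γ = e_i + e_j : impossible
    have heq := hce.symm.trans hcγ
    have hcx : coordN r (-(ee r (pI r I i)) - ee r (pI r I j)) x = 1 := by rw [heq, hβx]
    rw [coordN_sub, coordN_neg, coordN_ee r (pI r I i) x hx1 hxr,
        coordN_ee r (pI r I j) x hx1 hxr] at hcx
    exact (neg_ind_ne_one hcx).elim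

/-- in `Γ_{c_I}` no arrow starts in `B_I`, no arrow goes from `A_I`
to `A_I`, and consequently the graph has no directed cycle. -/
theorem stmt9 (r : ℕ) (hr : 5 ≤ r) (hodd : Odd r)
    (I : Finset ℕ) (hI : I.Nonempty) (hIs : I ⊆ Finset.Icc 1 (r - 1)) :
    (∀ α ∈ BI r I, ∀ β ∈ AI r I ∪ BI r I, ¬ Arrow r (cI r I) α β) ∧
    (∀ α ∈ AI r I, ∀ β ∈ AI r I, ¬ Arrow r (cI r I) α β) ∧
    ¬ HasCycle r (cI r I) := by
  refine ⟨key_noB r hr I hI hIs, key_noAA r hr I hI hIs, ?_⟩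
  rintro ⟨n, f, hn, hmem, hcyc, harr⟩
  have h0 := classify r hr I hI hIs (f 0) (hmem 0 (Nat.zero_le n))
  rcases h0 with hA | hB
  · have harrn := harr (n-1) (by omega)
    have hn1 : (n-1)+1 = n := by omega
    rw [hn1] at harrn
    have hfn : f n ∈ AI r I := by rw [← hcyc]; exact hA
    rcases classify r hr I hI hIs (f (n-1)) (hmem (n-1) (by omega)) with hA' | hB'
    · exact key_noAA r hr I hI hIs (f (n-1)) hA' (f n) hfn harrn
    · exact key_noB r hr I hI hIs (f (n-1)) hB' (f n) (Or.inl hfn) harrn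
  · have harr0 := harr 0 hn
    have h1 := classify r hr I hI hIs (f 1) (hmem 1 hn)
    exact key_noB r hr I hI hIs (f 0) hB (f 1) h1 harr0

end
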